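/- arXiv:1310.4605 — 4 statements merged into one kernel-verified Lean document; each statement's English description precedes it below -/
import Mathlib

section
/- Let R be a commutative ring and let T be the free R-module spanned by (isomorphism classes of) finite rooted trees. Define a bilinear grafting product on T by t ◁ s := the sum, over all vertices v of t, of the rooted tree obtained from the disjoint union of t and s by adding an edge from the root of s to v (keeping the root of t as root). Then ◁ satisfies the (right) pre-Lie identity (t ◁ s) ◁ u − t ◁ (s ◁ u) = (t ◁ u) ◁ s − t ◁ (u ◁ s); hence (T, ◁) is a pre-Lie algebra. -/
/-!
STATEMENT 1: The free `R`-module spanned by isomorphism classes of finite rooted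
trees, equipped with the grafting product `t ◁ s` (the sum over all vertices `v`
of `t` of the tree obtained by attaching the root of `s` to `v` by a new edge),
satisfies the (right) pre-Lie identity
`(t ◁ s) ◁ u − t ◁ (s ◁ u) = (t ◁ u) ◁ s − t ◁ (u ◁ s)`.

Encoding: `PTree` is the type of finite *planar* rooted trees (`leaf` is the
one-vertex tree, `graft c t` adds `c` as a new first child of the root of `t`).
Isomorphism classes of finite rooted trees are classes of the relation
`TreeIso` (generated by congruence, transposition of adjacent children of the
root, and transitivity), so the free module on isomorphism classes is the
quotient of `PTree →₀ R` by the span of the differences `single t 1 − single t' 1`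
for `TreeIso t t'`.  The pre-Lie identity is stated as the assertion that the
associator difference lies in that span, i.e. it vanishes in the free module on
isomorphism classes of rooted trees.
-/

/-- Finite planar rooted trees: `leaf` is the one-vertex tree and `graft c t`
is the tree `t` with an extra child `c` attached to its root (as first child). -/
inductive PTree : Type
  | leaf : PTree
  | graft : PTree → PTree → PTree

/-- Isomorphism of rooted trees (equality up to reordering of children at each
vertex): generated by congruence, transposition of adjacent children of the
root, and transitivity. -/
inductive TreeIso : PTree → PTree → Prop
  | leaf : TreeIso .leaf .leaf
  | graft {c c' t t' : PTree} : TreeIso c c' → TreeIso t t' →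
      TreeIso (.graft c t) (.graft c' t')
  | swap (c₁ c₂ t : PTree) :
      TreeIso (.graft c₁ (.graft c₂ t)) (.graft c₂ (.graft c₁ t))
  | trans {a b c : PTree} : TreeIso a b → TreeIso b c → TreeIso a c

/-- The list of all trees obtained by grafting the root of `s` onto one of the
vertices of `t` by a new edge (one entry for each vertex of `t`). -/
def graftList : PTree → PTree → List PTree
  | .leaf, s => [.graft s .leaf]
  | .graft c t, s =>
      ((graftList c s).map fun c' => .graft c' t) ++
      ((graftList t s).map fun t' => .graft c t')

noncomputable section

variable (R : Type*) [CommRing R]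

/-- Grafting of basis elements: the sum over all vertices of `t` of the tree
obtained by grafting `s` at that vertex. -/
noncomputable def graftSum (t s : PTree) : PTree →₀ R :=
  ((graftList t s).map fun u => Finsupp.single u (1 : R)).sum

/-- The bilinear extension of grafting to the free `R`-module on rooted trees. -/
noncomputable def graftMul : (PTree →₀ R) →ₗ[R] (PTree →₀ R) →ₗ[R] (PTree →₀ R) :=
  Finsupp.lsum R fun t => LinearMap.toSpanSingleton R _
    (Finsupp.lsum R fun s =>
      LinearMap.toSpanSingleton R (PTree →₀ R) (graftSum R t s))

/-- The submodule identifying isomorphic rooted trees; the quotient by it is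
the free `R`-module on isomorphism classes of finite rooted trees. -/
noncomputable def isoRel : Submodule R (PTree →₀ R) :=
  Submodule.span R {d : PTree →₀ R |
    ∃ t t' : PTree, TreeIso t t' ∧ d = Finsupp.single t 1 - Finsupp.single t' 1}

/-!
Grafting `u` onto a tree of `t ◁ s` lands either on a vertex of `s`, which gives exactly the terms
of `t ◁ (s ◁ u)`, or on a vertex of `t`. Hence on basis trees the associator
`(t ◁ s) ◁ u - t ◁ (s ◁ u)` is the sum of the trees obtained from `t` by grafting `s` and `u` at
an ordered pair of vertices of `t`. Up to isomorphism this sum is symmetric in `s` and `u`: when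
both land on the same vertex, the two orders differ by a transposition of children. The identity
for arbitrary elements follows by trilinearity.
-/

section FreeModule

variable {S ι M : Type*} [CommSemiring S] [AddCommMonoid M] [Module S M]

theorem Finsupp.map_mem_of_forall_single_mem (f : (ι →₀ S) →ₗ[S] M) {p : Submodule S M}
    (h : ∀ i, f (Finsupp.single i 1) ∈ p) (x : ι →₀ S) : f x ∈ p := by
  induction x using Finsupp.induction_linear with
  | zero => simp
  | add x y hx hy => simpa using add_mem hx hy
  | single i r => rw [← Finsupp.smul_single_one, map_smul]; exact p.smul_mem r (h i)

theorem Finsupp.map₃_mem_of_forall_single_mem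
    (L : (ι →₀ S) →ₗ[S] (ι →₀ S) →ₗ[S] (ι →₀ S) →ₗ[S] M) {p : Submodule S M}
    (h : ∀ a b c, L (Finsupp.single a 1) (Finsupp.single b 1) (Finsupp.single c 1) ∈ p)
    (x y z : ι →₀ S) : L x y z ∈ p := by
  refine Finsupp.map_mem_of_forall_single_mem ((L.flip y).flip z) (fun a => ?_) x
  refine Finsupp.map_mem_of_forall_single_mem ((L (Finsupp.single a 1)).flip z) (fun b => ?_) y
  exact Finsupp.map_mem_of_forall_single_mem _ (h a b) z

end FreeModule

namespace LinearMap

variable {S M : Type*} [CommSemiring S] [AddCommGroup M] [Module S M]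

def associator (μ : M →ₗ[S] M →ₗ[S] M) : M →ₗ[S] M →ₗ[S] M →ₗ[S] M :=
  μ.compr₂ μ - (llcomp S M M M).compl₁₂ μ μ

@[simp]
theorem associator_apply (μ : M →ₗ[S] M →ₗ[S] M) (x y z : M) :
    μ.associator x y z = μ (μ x y) z - μ x (μ y z) := by
  simp [associator]

def preLieDefect (μ : M →ₗ[S] M →ₗ[S] M) : M →ₗ[S] M →ₗ[S] M →ₗ[S] M :=
  μ.associator - lflip.comp μ.associator

@[simp]
theorem preLieDefect_apply (μ : M →ₗ[S] M →ₗ[S] M) (x y z : M) :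
    μ.preLieDefect x y z = μ.associator x y z - μ.associator x z y := by
  simp [preLieDefect]

end LinearMap

theorem TreeIso.refl : ∀ t : PTree, TreeIso t t
  | .leaf => .leaf
  | .graft c t => .graft (TreeIso.refl c) (TreeIso.refl t)

def graftings (t s : PTree) : Multiset PTree := graftList t s

@[simp]
theorem graftings_leaf (s : PTree) : graftings .leaf s = {.graft s .leaf} := rfl

@[simp]
theorem graftings_graft (c t s : PTree) :
    graftings (.graft c t) s
      = (graftings c s).map (.graft · t) + (graftings t s).map (.graft c ·) := by
  simp [graftings, graftList]

/-- The trees obtained from `t` by grafting `s` and `u` at the vertices `v` and `v'` of `t`, one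
for each ordered pair `(v, v')`. -/
def doubleGraftings : PTree → PTree → PTree → Multiset PTree
  | .leaf, s, u => {.graft s (.graft u .leaf)}
  | .graft c t, s, u =>
      (doubleGraftings c s u).map (.graft · t) + (doubleGraftings t s u).map (.graft c ·)
        + (graftings c s).bind (fun w => (graftings t u).map (.graft w ·))
        + (graftings c u).bind (fun w => (graftings t s).map (.graft w ·))

theorem graftings_bind_graftings (s u : PTree) : ∀ t : PTree,
    (graftings t s).bind (graftings · u)
      = doubleGraftings t s u + (graftings s u).bind (graftings t ·)
  | .leaf => by
      simp [doubleGraftings, Multiset.bind_singleton, add_comm]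
  | .graft c t => by
      simp only [graftings_graft, doubleGraftings, Multiset.bind_map, Multiset.bind_add,
        Multiset.add_bind, ← Multiset.map_bind, graftings_bind_graftings s u c,
        graftings_bind_graftings s u t, Multiset.map_add]
      rw [Multiset.bind_map_comm (graftings t s) (graftings c u)]
      abel

theorem doubleGraftings_rel_swap : ∀ t s u : PTree,
    Multiset.Rel TreeIso (doubleGraftings t s u) (doubleGraftings t u s)
  | .leaf, s, u => .cons (.swap s u .leaf) .zero
  | .graft c t, s, u => by
      rw [doubleGraftings, doubleGraftings, add_assoc _ (Multiset.bind _ _),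
        add_comm (Multiset.bind _ _) (Multiset.bind _ _), ← add_assoc]
      refine .add (.add (.add ?_ ?_) ?_) ?_
      · exact Multiset.rel_map.2 ((doubleGraftings_rel_swap c s u).mono
          fun _ _ _ _ h => .graft h (.refl t))
      · exact Multiset.rel_map.2 ((doubleGraftings_rel_swap t s u).mono
          fun _ _ _ _ h => .graft (.refl c) h)
      all_goals exact Multiset.rel_refl_of_refl_on fun x _ => .refl x

def treeSum (m : Multiset PTree) : PTree →₀ R :=
  (m.map fun w => Finsupp.single w 1).sum

@[simp]
theorem treeSum_add (m m' : Multiset PTree) :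
    treeSum R (m + m') = treeSum R m + treeSum R m' := by
  simp [treeSum]

@[simp]
theorem treeSum_cons (a : PTree) (m : Multiset PTree) :
    treeSum R (a ::ₘ m) = Finsupp.single a 1 + treeSum R m := by
  simp [treeSum]

theorem treeSum_bind (m : Multiset PTree) (f : PTree → Multiset PTree) :
    treeSum R (m.bind f) = (m.map fun a => treeSum R (f a)).sum := by
  simp only [treeSum, Multiset.map_bind, Multiset.sum_bind]

theorem LinearMap.map_treeSum {M : Type*} [AddCommMonoid M] [Module R M]
    (f : (PTree →₀ R) →ₗ[R] M) (m : Multiset PTree) :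
    f (treeSum R m) = (m.map fun w => f (Finsupp.single w 1)).sum := by
  simp [treeSum, map_multiset_sum, Multiset.map_map]

theorem graftMul_single_single (t s : PTree) :
    graftMul R (Finsupp.single t 1) (Finsupp.single s 1) = treeSum R (graftings t s) := by
  simp [graftMul, graftSum, treeSum, graftings]

theorem graftMul_graftMul_single (t s u : PTree) :
    graftMul R (graftMul R (Finsupp.single t 1) (Finsupp.single s 1)) (Finsupp.single u 1)
      = treeSum R ((graftings t s).bind (graftings · u)) := by
  rw [graftMul_single_single, ← LinearMap.flip_apply, LinearMap.map_treeSum, treeSum_bind]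
  simp [graftMul_single_single]

theorem graftMul_single_graftMul (t s u : PTree) :
    graftMul R (Finsupp.single t 1) (graftMul R (Finsupp.single s 1) (Finsupp.single u 1))
      = treeSum R ((graftings s u).bind (graftings t ·)) := by
  rw [graftMul_single_single, LinearMap.map_treeSum, treeSum_bind]
  simp [graftMul_single_single]

theorem associator_graftMul_single (t s u : PTree) :
    (graftMul R).associator (Finsupp.single t 1) (Finsupp.single s 1) (Finsupp.single u 1)
      = treeSum R (doubleGraftings t s u) := by
  rw [LinearMap.associator_apply, graftMul_graftMul_single, graftMul_single_graftMul,
    graftings_bind_graftings, treeSum_add, add_sub_cancel_right]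

theorem treeSum_sub_mem_isoRel {m m' : Multiset PTree} (h : Multiset.Rel TreeIso m m') :
    treeSum R m - treeSum R m' ∈ isoRel R := by
  induction h with
  | zero => simp
  | @cons a b m m' hab _ ih =>
      rw [treeSum_cons, treeSum_cons, add_sub_add_comm]
      exact add_mem (Submodule.subset_span ⟨a, b, hab, rfl⟩) ih

/-- Grafting of rooted trees satisfies the (right) pre-Lie identity in the free
module on isomorphism classes of finite rooted trees. -/
theorem graft_preLie (x y z : PTree →₀ R) :
    graftMul R (graftMul R x y) z - graftMul R x (graftMul R y z)
      - (graftMul R (graftMul R x z) y - graftMul R x (graftMul R z y))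
      ∈ isoRel R := by
  have hbasis : ∀ t s u : PTree, (graftMul R).preLieDefect (Finsupp.single t 1)
      (Finsupp.single s 1) (Finsupp.single u 1) ∈ isoRel R := fun t s u => by
    rw [LinearMap.preLieDefect_apply, associator_graftMul_single, associator_graftMul_single]
    exact treeSum_sub_mem_isoRel R (doubleGraftings_rel_swap t s u)
  simpa using Finsupp.map₃_mem_of_forall_single_mem _ hbasis x y z

end
end

section
/- Let K be a commutative ring and V a K-module. For multilinear maps φ ∈ Hom_K(V^{⊗k}, V), ψ ∈ Hom_K(V^{⊗l}, V), χ ∈ Hom_K(V^{⊗m}, V), the Gerstenhaber circle product satisfies the graded (right) pre-Lie identity: (φ∘ψ)∘χ − φ∘(ψ∘χ) = (−1)^{(l−1)(m−1)} ( (φ∘χ)∘ψ − φ∘(χ∘ψ) ). In particular, ⊕_k Hom_K(V^{⊗k}, V) is a graded pre-Lie algebra under ∘. -/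
/-!
STATEMENT 3: For multilinear maps `φ ∈ Hom_K(V^{⊗k}, V)`, `ψ ∈ Hom_K(V^{⊗l}, V)`,
`χ ∈ Hom_K(V^{⊗m}, V)` on a `K`-module `V`, the Gerstenhaber circle product
satisfies the graded (right) pre-Lie identity
`(φ∘ψ)∘χ − φ∘(ψ∘χ) = (−1)^{(l−1)(m−1)} ( (φ∘χ)∘ψ − φ∘(χ∘ψ) )`.

Encoding: a `k`-ary multilinear map is regarded, via `extF`, as a function on
sequences `ℕ → V` depending only on its first `k` entries, and `circ k l Φ Ψ`
implements `(φ∘ψ)(a_1,…,a_{k+l−1}) = Σ_{i=1}^{k} (−1)^{(l−1)(i−1)}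
φ(a_1,…,a_{i−1}, ψ(a_i,…,a_{i+l−1}), a_{i+l},…,a_{k+l−1})` with `0`-based
indices.  Since the summation index `i` below is `0`-based (`i−1` above) and
`(l−1)·i ≡ (l+1)·i (mod 2)`, the sign is written `(−1)^{(l+1)·i}`; likewise
`(−1)^{(l−1)(m−1)} = (−1)^{(l+1)(m+1)}`.
-/

/-- Regard a `k`-ary function as a function on sequences (using the first `k`
entries). -/
def extF {V : Type*} (k : ℕ) (φ : (Fin k → V) → V) : (ℕ → V) → V :=
  fun a => φ fun i => a i

/-- The Gerstenhaber circle product of a `k`-cochain and an `l`-cochain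
(encoded as functions on sequences). -/
def circ {V : Type*} [AddCommGroup V] (k l : ℕ) (Φ Ψ : (ℕ → V) → V) : (ℕ → V) → V :=
  fun a => ∑ i ∈ Finset.range k, ((-1 : ℤ) ^ ((l + 1) * i)) •
    Φ (fun j => if j < i then a j else if j = i then Ψ (fun m => a (i + m)) else a (j + l - 1))

/-- Insertion of a block of arity `u` at position `i`. -/
def ins {V : Type*} (u : ℕ) (Θ : (ℕ → V) → V) (i : ℕ) (a : ℕ → V) : ℕ → V :=
  fun j => if j < i then a j else if j = i then Θ (fun s => a (i + s)) else a (j + u - 1)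

theorem circ_eq {V : Type*} [AddCommGroup V] (k u : ℕ) (Φ Θ : (ℕ → V) → V) (a : ℕ → V) :
    circ k u Φ Θ a = ∑ i ∈ Finset.range k, ((-1 : ℤ) ^ ((u + 1) * i)) • Φ (ins u Θ i a) := rfl

theorem npow_eq (a b : ℕ) (h : Even (a + b)) : ((-1 : ℤ)) ^ a = (-1) ^ b := by
  calc ((-1:ℤ))^a = (-1)^a * ((-1:ℤ))^(a+b) := by rw [h.neg_one_pow, mul_one]
    _ = (-1)^(a+(a+b)) := (pow_add (-1:ℤ) a (a+b)).symm
    _ = (-1)^(b + 2*a) := by rw [show a+(a+b) = b+2*a from by omega]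
    _ = (-1)^b * (((-1:ℤ))^2)^a := by rw [pow_add, pow_mul]
    _ = (-1)^b := by norm_num

theorem sum_range_add' {M : Type*} [AddCommMonoid M] (f : ℕ → M) (x y : ℕ) :
    ∑ j ∈ Finset.range (x + y), f j
      = (∑ j ∈ Finset.range x, f j) + ∑ r ∈ Finset.range y, f (x + r) := by
  induction y with
  | zero => simp
  | succ n ih =>
      rw [show x + (n+1) = (x+n)+1 from rfl, Finset.sum_range_succ, ih,
        Finset.sum_range_succ, add_assoc]

theorem sum_three {M : Type*} [AddCommMonoid M] (f : ℕ → M) (n x y z : ℕ) (h : n = x + y + z) :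
    ∑ j ∈ Finset.range n, f j
      = (∑ j ∈ Finset.range x, f j) + (∑ r ∈ Finset.range y, f (x + r))
        + ∑ d ∈ Finset.range z, f (x + y + d) := by
  subst h
  rw [sum_range_add' f (x+y) z, sum_range_add' f x y]

theorem sum_trunc {M : Type*} [AddCommMonoid M] (f : ℕ → M) (n N : ℕ) (h : n ≤ N) :
    ∑ j ∈ Finset.range n, f j = ∑ j ∈ Finset.range N, if j < n then f j else 0 := by
  rw [Finset.sum_ite, Finset.sum_const_zero, add_zero]
  apply Finset.sum_congr _ (fun _ _ => rfl)
  ext j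
  simp only [Finset.mem_range, Finset.mem_filter]
  omega

theorem sum_shift {M : Type*} [AddCommMonoid M] (f : ℕ → M) (c n : ℕ) :
    ∑ i ∈ Finset.range (c + n), (if c ≤ i then f i else 0) = ∑ d ∈ Finset.range n, f (c + d) := by
  rw [sum_range_add']
  rw [Finset.sum_eq_zero (fun j hj => by
    rw [if_neg]; simp only [Finset.mem_range] at hj; omega), zero_add]
  exact Finset.sum_congr rfl fun r _ => by rw [if_pos (by omega)]

theorem ins_swap {V : Type*} (u v p q : ℕ) (hpq : p < q) (Θ₁ Θ₂ : (ℕ → V) → V)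
    (hΘ₁ : ∀ b b' : ℕ → V, (∀ s, s < u → b s = b' s) → Θ₁ b = Θ₁ b') (a : ℕ → V) :
    ins v Θ₂ q (ins u Θ₁ p a) = ins u Θ₁ p (ins v Θ₂ (q + u - 1) a) := by
  funext t
  simp only [ins]
  rcases lt_trichotomy t p with h | h | h
  · -- t < p : both sides are `a t`
    rw [if_pos (show t < q by omega), if_pos h, if_pos h,
      if_pos (show t < q + u - 1 by omega)]
  · -- t = p : both sides are Θ₁ applied to sequences agreeing below u
    rw [if_pos (show t < q by omega), if_neg (show ¬ t < p by omega), if_pos h,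
      if_neg (show ¬ t < p by omega), if_pos h]
    apply hΘ₁
    intro s hs
    exact (if_pos (show p + s < q + u - 1 by omega)).symm
  · rcases lt_trichotomy t q with h2 | h2 | h2
    · -- p < t < q
      rw [if_pos h2, if_neg (show ¬ t < p by omega), if_neg (show t ≠ p by omega),
        if_neg (show ¬ t < p by omega), if_neg (show t ≠ p by omega),
        if_pos (show t + u - 1 < q + u - 1 by omega)]
    · -- t = q
      rw [if_neg (show ¬ t < q by omega), if_pos h2,
        if_neg (show ¬ t < p by omega), if_neg (show t ≠ p by omega),
        if_neg (show ¬ t + u - 1 < q + u - 1 by omega),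
        if_pos (show t + u - 1 = q + u - 1 by omega)]
      congr 1
      funext s
      rw [if_neg (show ¬ q + s < p by omega), if_neg (show q + s ≠ p by omega)]
      congr 1
      omega
    · -- t > q
      rw [if_neg (show ¬ t < q by omega), if_neg (show t ≠ q by omega),
        if_neg (show ¬ t + v - 1 < p by omega), if_neg (show t + v - 1 ≠ p by omega),
        if_neg (show ¬ t < p by omega), if_neg (show t ≠ p by omega),
        if_neg (show ¬ t + u - 1 < q + u - 1 by omega),
        if_neg (show t + u - 1 ≠ q + u - 1 by omega)]
      congr 1
      omega

theorem extF_local {V : Type*} (k : ℕ) (φ : (Fin k → V) → V) (b b' : ℕ → V)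
    (h : ∀ s, s < k → b s = b' s) : extF k φ b = extF k φ b' :=
  congrArg φ (funext fun i => h i i.2)

theorem nested_val {V : Type*} (k l m i r : ℕ) (hik : i < k) (hrl : r < l)
    (φ : (Fin k → V) → V) (Ψ Χ W : (ℕ → V) → V) (a : ℕ → V) :
    extF k φ (ins l Ψ i (ins m Χ (i + r) a))
      = φ (Function.update (fun t : Fin k => ins (l + m - 1) W i a ↑t) ⟨i, hik⟩
          (Ψ (ins m Χ r fun s => a (i + s)))) := by
  show φ _ = φ _
  congr 1
  funext t
  rw [Function.update_apply]
  rcases lt_trichotomy (t : ℕ) i with h | h | h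
  · rw [if_neg (Fin.ne_of_val_ne (show (t:ℕ) ≠ i by omega))]
    simp only [ins]
    rw [if_pos h, if_pos (show (t:ℕ) < i + r by omega), if_pos h]
  · rw [if_pos (Fin.ext h)]
    simp only [ins]
    rw [if_neg (show ¬ (t:ℕ) < i by omega), if_pos h]
    congr 1
    funext s
    simp only [ins]
    rcases lt_trichotomy s r with hs | hs | hs
    · rw [if_pos (show i + s < i + r by omega), if_pos hs]
    · rw [if_neg (show ¬ i + s < i + r by omega), if_pos (show i + s = i + r by omega),
        if_neg (show ¬ s < r by omega), if_pos hs]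
      congr 1
      funext s'
      show a (i + r + s') = a (i + (r + s'))
      congr 1
      omega
    · rw [if_neg (show ¬ i + s < i + r by omega), if_neg (show i + s ≠ i + r by omega),
        if_neg (show ¬ s < r by omega), if_neg (show s ≠ r by omega)]
      show a (i + s + m - 1) = a (i + (s + m - 1))
      congr 1
      omega
  · rw [if_neg (Fin.ne_of_val_ne (show (t:ℕ) ≠ i by omega))]
    simp only [ins]
    rw [if_neg (show ¬ (t:ℕ) < i by omega), if_neg (show (t:ℕ) ≠ i by omega),
      if_neg (show ¬ (t:ℕ) + l - 1 < i + r by omega),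
      if_neg (show (t:ℕ) + l - 1 ≠ i + r by omega),
      if_neg (show ¬ (t:ℕ) < i by omega), if_neg (show (t:ℕ) ≠ i by omega)]
    congr 1
    omega

theorem sum_if_lt {M : Type*} [AddCommMonoid M] (F : ℕ → M) (j k : ℕ) (hjk : j < k) :
    ∑ i ∈ Finset.range k, (if j < i then F i else 0)
      = ∑ d ∈ Finset.range (k - 1 - j), F (j + 1 + d) := by
  have h := sum_shift F (j + 1) (k - 1 - j)
  rw [show (j + 1) + (k - 1 - j) = k from by omega] at h
  rw [← h]
  exact Finset.sum_congr rfl fun i _ => if_congr (by omega) rfl rfl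

theorem key_nested {K V : Type*} [CommRing K] [AddCommGroup V] [Module K V] {k : ℕ} (l m : ℕ)
    (φ : MultilinearMap K (fun _ : Fin k => V) V) (Ψ Χ : (ℕ → V) → V) (a : ℕ → V)
    (i : ℕ) (hi' : i < k) :
    (∑ r ∈ Finset.range l, ((-1 : ℤ) ^ ((m + 1) * (i + r)) * (-1 : ℤ) ^ ((l + 1) * i)) •
        extF k ⇑φ (ins l Ψ i (ins m Χ (i + r) a)))
      = ((-1 : ℤ) ^ ((l + m - 1 + 1) * i)) •
          extF k ⇑φ (ins (l + m - 1) (circ l m Ψ Χ) i a) := by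
  have hA : extF k ⇑φ (ins (l + m - 1) (circ l m Ψ Χ) i a)
      = ∑ r ∈ Finset.range l, ((-1 : ℤ) ^ ((m + 1) * r)) •
          φ (Function.update (fun t : Fin k => ins (l + m - 1) (circ l m Ψ Χ) i a ↑t) ⟨i, hi'⟩
            (Ψ (ins m Χ r fun s => a (i + s)))) := by
    set g : Fin k → V := fun t : Fin k => ins (l + m - 1) (circ l m Ψ Χ) i a ↑t with hg
    set A : V →+ V := AddMonoidHom.mk' (fun x => φ (Function.update g ⟨i, hi'⟩ x))
      (fun x y => φ.map_update_add g ⟨i, hi'⟩ x y) with hAdef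
    have h1 : g ⟨i, hi'⟩ = circ l m Ψ Χ (fun s => a (i + s)) := by
      show ins (l + m - 1) (circ l m Ψ Χ) i a i = _
      simp [ins]
    calc extF k ⇑φ (ins (l + m - 1) (circ l m Ψ Χ) i a)
        = φ g := rfl
      _ = A (g ⟨i, hi'⟩) := by
          show φ g = φ (Function.update g ⟨i, hi'⟩ (g ⟨i, hi'⟩))
          rw [Function.update_eq_self]
      _ = A (∑ r ∈ Finset.range l, ((-1 : ℤ) ^ ((m + 1) * r)) •
            Ψ (ins m Χ r fun s => a (i + s))) := by rw [h1, circ_eq]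
      _ = ∑ r ∈ Finset.range l, A (((-1 : ℤ) ^ ((m + 1) * r)) •
            Ψ (ins m Χ r fun s => a (i + s))) := map_sum A _ _
      _ = ∑ r ∈ Finset.range l, ((-1 : ℤ) ^ ((m + 1) * r)) •
            A (Ψ (ins m Χ r fun s => a (i + s))) :=
          Finset.sum_congr rfl fun r _ => map_zsmul A _ _
      _ = ∑ r ∈ Finset.range l, ((-1 : ℤ) ^ ((m + 1) * r)) •
            φ (Function.update g ⟨i, hi'⟩ (Ψ (ins m Χ r fun s => a (i + s)))) := rfl
  rw [hA, Finset.smul_sum]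
  refine Finset.sum_congr rfl fun r hr => ?_
  have hrl : r < l := Finset.mem_range.mp hr
  rw [smul_smul, ← nested_val k l m i r hi' hrl (⇑φ) Ψ Χ (circ l m Ψ Χ) a]
  congr 1
  rw [← pow_add, ← pow_add]
  exact npow_eq _ _ ⟨(m + 1) * r + (l + m + 1) * i, by
    rw [show l + m - 1 + 1 = l + m from by omega]; ring⟩

theorem expand {K V : Type*} [CommRing K] [AddCommGroup V] [Module K V] (k l m : ℕ)
    (φ : MultilinearMap K (fun _ : Fin k => V) V) (Ψ Χ : (ℕ → V) → V) (a : ℕ → V) :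
    circ (k + l - 1) m (circ k l (extF k ⇑φ) Ψ) Χ a
      = circ k (l + m - 1) (extF k ⇑φ) (circ l m Ψ Χ) a
        + (∑ p ∈ Finset.range k, ∑ d ∈ Finset.range (k - 1 - p),
            ((-1 : ℤ) ^ ((m + 1) * p) * (-1 : ℤ) ^ ((l + 1) * (p + 1 + d))) •
              extF k ⇑φ (ins l Ψ (p + 1 + d) (ins m Χ p a)))
        + (∑ p ∈ Finset.range k, ∑ d ∈ Finset.range (k - 1 - p),
            ((-1 : ℤ) ^ ((m + 1) * (p + l + d)) * (-1 : ℤ) ^ ((l + 1) * p)) •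
              extF k ⇑φ (ins l Ψ p (ins m Χ (p + l + d) a))) := by
  calc circ (k + l - 1) m (circ k l (extF k ⇑φ) Ψ) Χ a
      = ∑ j ∈ Finset.range (k + l - 1), ∑ i ∈ Finset.range k,
          ((-1 : ℤ) ^ ((m + 1) * j) * (-1 : ℤ) ^ ((l + 1) * i)) •
            extF k ⇑φ (ins l Ψ i (ins m Χ j a)) := by
        rw [circ_eq]
        refine Finset.sum_congr rfl fun j _ => ?_
        rw [circ_eq, Finset.smul_sum]
        exact Finset.sum_congr rfl fun i _ => smul_smul _ _ _
    _ = ∑ i ∈ Finset.range k, ∑ j ∈ Finset.range (k + l - 1),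
          ((-1 : ℤ) ^ ((m + 1) * j) * (-1 : ℤ) ^ ((l + 1) * i)) •
            extF k ⇑φ (ins l Ψ i (ins m Χ j a)) := Finset.sum_comm
    _ = ∑ i ∈ Finset.range k,
          ((∑ j ∈ Finset.range i,
            ((-1 : ℤ) ^ ((m + 1) * j) * (-1 : ℤ) ^ ((l + 1) * i)) •
              extF k ⇑φ (ins l Ψ i (ins m Χ j a)))
          + (∑ r ∈ Finset.range l,
            ((-1 : ℤ) ^ ((m + 1) * (i + r)) * (-1 : ℤ) ^ ((l + 1) * i)) •
              extF k ⇑φ (ins l Ψ i (ins m Χ (i + r) a)))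
          + ∑ d ∈ Finset.range (k - 1 - i),
            ((-1 : ℤ) ^ ((m + 1) * (i + l + d)) * (-1 : ℤ) ^ ((l + 1) * i)) •
              extF k ⇑φ (ins l Ψ i (ins m Χ (i + l + d) a))) :=
        Finset.sum_congr rfl fun i hi =>
          sum_three _ (k + l - 1) i l (k - 1 - i)
            (by have := Finset.mem_range.mp hi; omega)
    _ = (∑ i ∈ Finset.range k, ∑ j ∈ Finset.range i,
            ((-1 : ℤ) ^ ((m + 1) * j) * (-1 : ℤ) ^ ((l + 1) * i)) •
              extF k ⇑φ (ins l Ψ i (ins m Χ j a)))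
        + (∑ i ∈ Finset.range k, ∑ r ∈ Finset.range l,
            ((-1 : ℤ) ^ ((m + 1) * (i + r)) * (-1 : ℤ) ^ ((l + 1) * i)) •
              extF k ⇑φ (ins l Ψ i (ins m Χ (i + r) a)))
        + ∑ i ∈ Finset.range k, ∑ d ∈ Finset.range (k - 1 - i),
            ((-1 : ℤ) ^ ((m + 1) * (i + l + d)) * (-1 : ℤ) ^ ((l + 1) * i)) •
              extF k ⇑φ (ins l Ψ i (ins m Χ (i + l + d) a)) := by
        rw [Finset.sum_add_distrib, Finset.sum_add_distrib]
    _ = circ k (l + m - 1) (extF k ⇑φ) (circ l m Ψ Χ) a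
        + (∑ p ∈ Finset.range k, ∑ d ∈ Finset.range (k - 1 - p),
            ((-1 : ℤ) ^ ((m + 1) * p) * (-1 : ℤ) ^ ((l + 1) * (p + 1 + d))) •
              extF k ⇑φ (ins l Ψ (p + 1 + d) (ins m Χ p a)))
        + (∑ p ∈ Finset.range k, ∑ d ∈ Finset.range (k - 1 - p),
            ((-1 : ℤ) ^ ((m + 1) * (p + l + d)) * (-1 : ℤ) ^ ((l + 1) * p)) •
              extF k ⇑φ (ins l Ψ p (ins m Χ (p + l + d) a))) := by
        have hN : (∑ i ∈ Finset.range k, ∑ r ∈ Finset.range l,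
            ((-1 : ℤ) ^ ((m + 1) * (i + r)) * (-1 : ℤ) ^ ((l + 1) * i)) •
              extF k ⇑φ (ins l Ψ i (ins m Χ (i + r) a)))
            = circ k (l + m - 1) (extF k ⇑φ) (circ l m Ψ Χ) a := by
          rw [circ_eq]
          exact Finset.sum_congr rfl fun i hi =>
            key_nested l m φ Ψ Χ a i (Finset.mem_range.mp hi)
        have hPA : (∑ i ∈ Finset.range k, ∑ j ∈ Finset.range i,
            ((-1 : ℤ) ^ ((m + 1) * j) * (-1 : ℤ) ^ ((l + 1) * i)) •
              extF k ⇑φ (ins l Ψ i (ins m Χ j a)))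
            = ∑ p ∈ Finset.range k, ∑ d ∈ Finset.range (k - 1 - p),
            ((-1 : ℤ) ^ ((m + 1) * p) * (-1 : ℤ) ^ ((l + 1) * (p + 1 + d))) •
              extF k ⇑φ (ins l Ψ (p + 1 + d) (ins m Χ p a)) := by
          calc (∑ i ∈ Finset.range k, ∑ j ∈ Finset.range i,
              ((-1 : ℤ) ^ ((m + 1) * j) * (-1 : ℤ) ^ ((l + 1) * i)) •
                extF k ⇑φ (ins l Ψ i (ins m Χ j a)))
              = ∑ i ∈ Finset.range k, ∑ j ∈ Finset.range k,
                if j < i then ((-1 : ℤ) ^ ((m + 1) * j) * (-1 : ℤ) ^ ((l + 1) * i)) •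
                  extF k ⇑φ (ins l Ψ i (ins m Χ j a)) else 0 :=
                Finset.sum_congr rfl fun i hi =>
                  sum_trunc _ i k (le_of_lt (Finset.mem_range.mp hi))
            _ = ∑ j ∈ Finset.range k, ∑ i ∈ Finset.range k,
                if j < i then ((-1 : ℤ) ^ ((m + 1) * j) * (-1 : ℤ) ^ ((l + 1) * i)) •
                  extF k ⇑φ (ins l Ψ i (ins m Χ j a)) else 0 := Finset.sum_comm
            _ = ∑ p ∈ Finset.range k, ∑ d ∈ Finset.range (k - 1 - p),
                ((-1 : ℤ) ^ ((m + 1) * p) * (-1 : ℤ) ^ ((l + 1) * (p + 1 + d))) •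
                  extF k ⇑φ (ins l Ψ (p + 1 + d) (ins m Χ p a)) :=
                Finset.sum_congr rfl fun j hj =>
                  sum_if_lt _ j k (Finset.mem_range.mp hj)
        rw [hN, hPA]
        abel

/-- The Gerstenhaber circle product satisfies the graded (right) pre-Lie
identity; in particular `⊕_k Hom_K(V^{⊗k}, V)` is a graded pre-Lie algebra. -/
theorem circ_graded_preLie (K V : Type*) [CommRing K] [AddCommGroup V] [Module K V]
    (k l m : ℕ)
    (φ : MultilinearMap K (fun _ : Fin k => V) V)
    (ψ : MultilinearMap K (fun _ : Fin l => V) V)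
    (χ : MultilinearMap K (fun _ : Fin m => V) V) :
    circ (k + l - 1) m (circ k l (extF k ⇑φ) (extF l ⇑ψ)) (extF m ⇑χ)
      - circ k (l + m - 1) (extF k ⇑φ) (circ l m (extF l ⇑ψ) (extF m ⇑χ))
    = ((-1 : ℤ) ^ ((l + 1) * (m + 1))) •
        (circ (k + m - 1) l (circ k m (extF k ⇑φ) (extF m ⇑χ)) (extF l ⇑ψ)
          - circ k (m + l - 1) (extF k ⇑φ) (circ m l (extF m ⇑χ) (extF l ⇑ψ))) := by
  funext a
  simp only [Pi.sub_apply, Pi.smul_apply]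
  rw [expand k l m φ (extF l ⇑ψ) (extF m ⇑χ) a, expand k m l φ (extF m ⇑χ) (extF l ⇑ψ) a]
  have hcancel : ∀ X A B : V, X + A + B - X = A + B := fun X A B => by abel
  rw [hcancel, hcancel, smul_add]
  have claim2 : (∑ p ∈ Finset.range k, ∑ d ∈ Finset.range (k - 1 - p),
      ((-1 : ℤ) ^ ((m + 1) * p) * (-1 : ℤ) ^ ((l + 1) * (p + 1 + d))) •
        extF k ⇑φ (ins l (extF l ⇑ψ) (p + 1 + d) (ins m (extF m ⇑χ) p a)))
      = ((-1 : ℤ) ^ ((l + 1) * (m + 1))) •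
        ∑ p ∈ Finset.range k, ∑ d ∈ Finset.range (k - 1 - p),
          ((-1 : ℤ) ^ ((l + 1) * (p + m + d)) * (-1 : ℤ) ^ ((m + 1) * p)) •
            extF k ⇑φ (ins m (extF m ⇑χ) p (ins l (extF l ⇑ψ) (p + m + d) a)) := by
    rw [Finset.smul_sum]
    refine Finset.sum_congr rfl fun p _ => ?_
    rw [Finset.smul_sum]
    refine Finset.sum_congr rfl fun d _ => ?_
    have hv := ins_swap m l p (p + 1 + d) (by omega) (extF m ⇑χ) (extF l ⇑ψ)
      (extF_local m ⇑χ) a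
    rw [show p + 1 + d + m - 1 = p + m + d from by omega] at hv
    rw [← hv, smul_smul, ← pow_add, ← pow_add, ← pow_add]
    congr 1
    exact npow_eq _ _ ⟨(m + 1) * p + (l + 1) * (p + d + m + 1), by ring⟩
  have claim1 : (∑ p ∈ Finset.range k, ∑ d ∈ Finset.range (k - 1 - p),
      ((-1 : ℤ) ^ ((m + 1) * (p + l + d)) * (-1 : ℤ) ^ ((l + 1) * p)) •
        extF k ⇑φ (ins l (extF l ⇑ψ) p (ins m (extF m ⇑χ) (p + l + d) a)))
      = ((-1 : ℤ) ^ ((l + 1) * (m + 1))) •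
        ∑ p ∈ Finset.range k, ∑ d ∈ Finset.range (k - 1 - p),
          ((-1 : ℤ) ^ ((l + 1) * p) * (-1 : ℤ) ^ ((m + 1) * (p + 1 + d))) •
            extF k ⇑φ (ins m (extF m ⇑χ) (p + 1 + d) (ins l (extF l ⇑ψ) p a)) := by
    rw [Finset.smul_sum]
    refine Finset.sum_congr rfl fun p _ => ?_
    rw [Finset.smul_sum]
    refine Finset.sum_congr rfl fun d _ => ?_
    have hv := ins_swap l m p (p + 1 + d) (by omega) (extF l ⇑ψ) (extF m ⇑χ)
      (extF_local l ⇑ψ) a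
    rw [show p + 1 + d + l - 1 = p + l + d from by omega] at hv
    rw [hv, smul_smul, ← pow_add, ← pow_add, ← pow_add]
    congr 1
    exact npow_eq _ _ ⟨(l + 1) * p + (m + 1) * (p + d + l + 1), by ring⟩
  rw [claim2, claim1]
  exact add_comm _ _
end

section
/- Let K be a commutative ring and V a K-module. The Gerstenhaber bracket [φ,ψ] := φ∘ψ − (−1)^{(k−1)(l−1)} ψ∘φ on multilinear maps φ ∈ Hom_K(V^{⊗k}, V), ψ ∈ Hom_K(V^{⊗l}, V) satisfies graded antisymmetry, [φ,ψ] = −(−1)^{(k−1)(l−1)}[ψ,φ], and the graded Jacobi identity: (−1)^{(k−1)(m−1)}[φ,[ψ,χ]] + (−1)^{(l−1)(k−1)}[ψ,[χ,φ]] + (−1)^{(m−1)(l−1)}[χ,[φ,ψ]] = 0 for all φ ∈ Hom_K(V^{⊗k}, V), ψ ∈ Hom_K(V^{⊗l}, V), χ ∈ Hom_K(V^{⊗m}, V). Hence the shifted space of multilinear maps is a graded Lie algebra under the Gerstenhaber bracket. -/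
/-- The Gerstenhaber bracket `[φ,ψ] = φ∘ψ − (−1)^{(k−1)(l−1)} ψ∘φ` of a
`k`-cochain and an `l`-cochain. -/
def gerstBracket {V : Type*} [AddCommGroup V] (k l : ℕ) (Φ Ψ : (ℕ → V) → V) : (ℕ → V) → V :=
  circ k l Φ Ψ - ((-1 : ℤ) ^ ((k + 1) * (l + 1))) • circ l k Ψ Φ

namespace GerstAux

theorem neg_one_pow_add_two_mul (p r : ℕ) : (-1 : ℤ) ^ (p + 2 * r) = (-1 : ℤ) ^ p := by
  rw [pow_add, pow_mul, neg_one_sq, one_pow, mul_one]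

theorem neg_one_pow_sq (n : ℕ) : (-1 : ℤ) ^ n * (-1 : ℤ) ^ n = 1 := by
  rw [← pow_add, ← two_mul, pow_mul, neg_one_sq, one_pow]

variable {V : Type*} [AddCommGroup V]

def ins (i l : ℕ) (x : V) (a : ℕ → V) : ℕ → V :=
  fun j => if j < i then a j else if j = i then x else a (j + l - 1)

theorem circ_apply (k l : ℕ) (Φ Ψ : (ℕ → V) → V) (a : ℕ → V) :
    circ k l Φ Ψ a =
      ∑ i ∈ Finset.range k, ((-1 : ℤ) ^ ((l + 1) * i)) • Φ (ins i l (Ψ fun q => a (i + q)) a) :=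
  rfl

theorem circ_zero_left (n p : ℕ) (F : (ℕ → V) → V) : circ n p (0 : (ℕ → V) → V) F = 0 := by
  funext a; simp [circ]

theorem circ_sub_left (n p : ℕ) (F G X : (ℕ → V) → V) :
    circ n p (F - G) X = circ n p F X - circ n p G X := by
  funext a
  simp [circ, smul_sub, Finset.sum_sub_distrib]

theorem circ_zsmul_left (n p : ℕ) (z : ℤ) (F X : (ℕ → V) → V) :
    circ n p (z • F) X = z • circ n p F X := by
  funext a
  simp [circ, Finset.smul_sum, smul_smul, Int.mul_comm]

def dterm (l m : ℕ) (Φ Ψ X : (ℕ → V) → V) (a : ℕ → V) (p : ℕ × ℕ) : V :=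
  ((-1 : ℤ) ^ ((m + 1) * p.1 + (l + 1) * p.2)) •
    Φ (ins p.2 l
        (Ψ fun q => (ins p.1 m (X fun q' => a (p.1 + q')) a) (p.2 + q))
        (ins p.1 m (X fun q' => a (p.1 + q')) a))

def Bsum (k l m : ℕ) (Φ Ψ X : (ℕ → V) → V) (a : ℕ → V) : V :=
  ∑ p ∈ (Finset.range (k + l - 1) ×ˢ Finset.range k).filter (fun p => p.1 < p.2),
    dterm l m Φ Ψ X a p

def Csum (k l m : ℕ) (Φ Ψ X : (ℕ → V) → V) (a : ℕ → V) : V :=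
  ∑ p ∈ (Finset.range (k + l - 1) ×ˢ Finset.range k).filter (fun p => p.2 + l ≤ p.1),
    dterm l m Φ Ψ X a p

theorem BC_match (k l m : ℕ) (Φ : (ℕ → V) → V) (g : (Fin l → V) → V) (h : (Fin m → V) → V)
    (a : ℕ → V) :
    Bsum k l m Φ (extF l g) (extF m h) a
      = ((-1 : ℤ) ^ ((l + 1) * (m + 1))) • Csum k m l Φ (extF m h) (extF l g) a := by
  classical
  rw [Bsum, Csum, Finset.smul_sum]
  refine Finset.sum_nbij' (fun p => (p.2 + m - 1, p.1)) (fun p => (p.2, p.1 + 1 - m))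
    ?_ ?_ ?_ ?_ ?_
  · rintro ⟨j0, i0⟩ hp
    simp only [Finset.mem_filter, Finset.mem_product, Finset.mem_range] at hp ⊢
    omega
  · rintro ⟨s0, t0⟩ hq
    simp only [Finset.mem_filter, Finset.mem_product, Finset.mem_range] at hq ⊢
    omega
  · rintro ⟨j0, i0⟩ hp
    simp only [Finset.mem_filter, Finset.mem_product, Finset.mem_range] at hp
    show (j0, i0 + m - 1 + 1 - m) = (j0, i0)
    rw [show i0 + m - 1 + 1 - m = i0 from by omega]
  · rintro ⟨s0, t0⟩ hq
    simp only [Finset.mem_filter, Finset.mem_product, Finset.mem_range] at hq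
    show (s0 + 1 - m + m - 1, t0) = (s0, t0)
    rw [show s0 + 1 - m + m - 1 = s0 from by omega]
  · rintro ⟨j0, i0⟩ hp
    simp only [Finset.mem_filter, Finset.mem_product, Finset.mem_range] at hp
    obtain ⟨⟨hj0, hi0⟩, hji⟩ := hp
    obtain ⟨i', rfl⟩ : ∃ i', i0 = i' + 1 := ⟨i0 - 1, by omega⟩
    show dterm l m Φ (extF l g) (extF m h) a (j0, i' + 1)
      = (-1 : ℤ) ^ ((l + 1) * (m + 1)) • dterm m l Φ (extF m h) (extF l g) a (i' + 1 + m - 1, j0)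
    rw [show i' + 1 + m - 1 = i' + m from by omega]
    simp only [dterm, smul_smul, ← pow_add]
    have hsgn : ((-1 : ℤ)) ^ ((m + 1) * j0 + (l + 1) * (i' + 1))
        = (-1 : ℤ) ^ ((l + 1) * (m + 1) + ((l + 1) * (i' + m) + (m + 1) * j0)) := by
      rw [show (l + 1) * (m + 1) + ((l + 1) * (i' + m) + (m + 1) * j0)
          = ((m + 1) * j0 + (l + 1) * (i' + 1)) + 2 * ((l + 1) * m) from by ring,
        neg_one_pow_add_two_mul]
    rw [hsgn]
    congr 1
    have hG : (extF l g) (fun q =>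
          (ins j0 m (extF m h fun q' => a (j0 + q')) a) (i' + 1 + q))
        = (extF l g) (fun q' => a (i' + m + q')) := by
      congr 1
      funext q
      simp only [ins]
      split_ifs <;> first | rfl | omega | (congr 1; omega)
    have hH : (extF m h) (fun q =>
          (ins (i' + m) l (extF l g fun q' => a (i' + m + q')) a) (j0 + q))
        = (extF m h) (fun q' => a (j0 + q')) := by
      unfold extF
      congr 1
      funext r
      have hr := r.isLt
      simp only [ins]
      split_ifs <;> first | rfl | omega | (congr 1; omega)
    rw [hG, hH]
    congr 1
    funext p
    simp only [ins]
    split_ifs <;> first | rfl | omega | (congr 1; omega)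

section Mult

variable {K : Type*} [CommRing K] [Module K V] {k : ℕ}
  (φ : MultilinearMap K (fun _ : Fin k => V) V)

theorem extF_ins (i : ℕ) (hi : i < k) (l : ℕ) (x : V) (a : ℕ → V) :
    extF k ⇑φ (ins i l x a) =
      φ (Function.update (fun q : Fin k => ins i l 0 a q) ⟨i, hi⟩ x) := by
  unfold extF
  congr 1
  funext q
  rcases eq_or_ne q (⟨i, hi⟩ : Fin k) with hq | hq
  · subst hq; simp [ins]
  · rw [Function.update_of_ne hq]
    have hne : (q : ℕ) ≠ i := fun hc => hq (Fin.ext hc)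
    simp only [ins]
    split_ifs <;> first | rfl | exact absurd ‹(q : ℕ) = i› hne

def slotHom (i : ℕ) (hi : i < k) (l : ℕ) (a : ℕ → V) : V →+ V where
  toFun x := extF k ⇑φ (ins i l x a)
  map_zero' := by
    show extF k ⇑φ (ins i l (0 : V) a) = 0
    rw [extF_ins φ i hi]; exact φ.map_update_zero _ _
  map_add' x y := by
    show extF k ⇑φ (ins i l (x + y) a)
      = extF k ⇑φ (ins i l x a) + extF k ⇑φ (ins i l y a)
    simp only [extF_ins φ i hi, MultilinearMap.map_update_add]

@[simp] theorem slotHom_apply (i : ℕ) (hi : i < k) (l : ℕ) (a : ℕ → V) (x : V) :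
    slotHom φ i hi l a x = extF k ⇑φ (ins i l x a) := rfl

theorem circ_zero_right (n : ℕ) : circ k n (extF k ⇑φ) (0 : (ℕ → V) → V) = 0 := by
  funext a
  rw [circ_apply]
  refine Finset.sum_eq_zero fun i hi => ?_
  have hik : i < k := Finset.mem_range.mp hi
  have h1 : extF k ⇑φ (ins i n ((0 : (ℕ → V) → V) fun q => a (i + q)) a)
      = slotHom φ i hik n a 0 := rfl
  rw [h1, map_zero, smul_zero]

theorem circ_sub_right (n : ℕ) (F G : (ℕ → V) → V) :
    circ k n (extF k ⇑φ) (F - G) = circ k n (extF k ⇑φ) F - circ k n (extF k ⇑φ) G := by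
  funext a
  simp only [Pi.sub_apply]
  rw [circ_apply, circ_apply, circ_apply, ← Finset.sum_sub_distrib]
  refine Finset.sum_congr rfl fun i hi => ?_
  have hik : i < k := Finset.mem_range.mp hi
  rw [← smul_sub]
  congr 1
  have h1 : extF k ⇑φ (ins i n ((F - G) fun q => a (i + q)) a)
      = slotHom φ i hik n a ((F fun q => a (i + q)) - G fun q => a (i + q)) := by
    rw [slotHom_apply, Pi.sub_apply]
  rw [h1, map_sub, slotHom_apply, slotHom_apply]

theorem circ_zsmul_right (n : ℕ) (z : ℤ) (F : (ℕ → V) → V) :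
    circ k n (extF k ⇑φ) (z • F) = z • circ k n (extF k ⇑φ) F := by
  funext a
  simp only [Pi.smul_apply]
  rw [circ_apply, circ_apply, Finset.smul_sum]
  refine Finset.sum_congr rfl fun i hi => ?_
  have hik : i < k := Finset.mem_range.mp hi
  have h1 : extF k ⇑φ (ins i n ((z • F) fun q => a (i + q)) a)
      = slotHom φ i hik n a (z • (F fun q => a (i + q))) := by
    rw [slotHom_apply, Pi.smul_apply]
  rw [h1, map_zsmul, slotHom_apply, smul_comm]

theorem decomp (l m : ℕ) (Ψ X : (ℕ → V) → V) (a : ℕ → V) :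
    circ (k + l - 1) m (circ k l (extF k ⇑φ) Ψ) X a
      = circ k (l + m - 1) (extF k ⇑φ) (circ l m Ψ X) a
        + Bsum k l m (extF k ⇑φ) Ψ X a + Csum k l m (extF k ⇑φ) Ψ X a := by
  classical
  have hL : circ (k + l - 1) m (circ k l (extF k ⇑φ) Ψ) X a
      = ∑ p ∈ Finset.range (k + l - 1) ×ˢ Finset.range k, dterm l m (extF k ⇑φ) Ψ X a p := by
    rw [Finset.sum_product, circ_apply]
    refine Finset.sum_congr rfl fun j hj => ?_
    rw [circ_apply, Finset.smul_sum]
    refine Finset.sum_congr rfl fun i hi => ?_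
    rw [smul_smul, ← pow_add]
    rfl
  have hnest : ∑ p ∈ (Finset.range (k + l - 1) ×ˢ Finset.range k).filter
        (fun p => p.2 ≤ p.1 ∧ p.1 < p.2 + l), dterm l m (extF k ⇑φ) Ψ X a p
      = circ k (l + m - 1) (extF k ⇑φ) (circ l m Ψ X) a := by
    have hstep : ∀ i ∈ Finset.range k,
        ((-1 : ℤ) ^ ((l + m - 1 + 1) * i)) •
            extF k ⇑φ (ins i (l + m - 1) ((circ l m Ψ X) fun q => a (i + q)) a)
          = ∑ j' ∈ Finset.range l,
              ((-1 : ℤ) ^ ((l + m - 1 + 1) * i + (m + 1) * j')) •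
                extF k ⇑φ (ins i (l + m - 1)
                  (Ψ (ins j' m (X fun q' => a (i + (j' + q'))) fun q => a (i + q))) a) := by
      intro i hi
      have hik : i < k := Finset.mem_range.mp hi
      have h1 : extF k ⇑φ (ins i (l + m - 1) ((circ l m Ψ X) fun q => a (i + q)) a)
          = slotHom φ i hik (l + m - 1) a ((circ l m Ψ X) fun q => a (i + q)) := rfl
      rw [h1, circ_apply, map_sum, Finset.smul_sum]
      refine Finset.sum_congr rfl fun j' hj' => ?_
      rw [map_zsmul, smul_smul, ← pow_add]
      rfl
    calc ∑ p ∈ (Finset.range (k + l - 1) ×ˢ Finset.range k).filter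
          (fun p => p.2 ≤ p.1 ∧ p.1 < p.2 + l), dterm l m (extF k ⇑φ) Ψ X a p
        = ∑ q ∈ Finset.range k ×ˢ Finset.range l,
            dterm l m (extF k ⇑φ) Ψ X a (q.1 + q.2, q.1) := by
          refine Finset.sum_nbij' (fun p => (p.2, p.1 - p.2)) (fun q => (q.1 + q.2, q.1))
            ?_ ?_ ?_ ?_ ?_
          · rintro ⟨j0, i0⟩ hp
            simp only [Finset.mem_filter, Finset.mem_product, Finset.mem_range] at hp ⊢
            omega
          · rintro ⟨i0, j0⟩ hq
            simp only [Finset.mem_filter, Finset.mem_product, Finset.mem_range] at hq ⊢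
            omega
          · rintro ⟨j0, i0⟩ hp
            simp only [Finset.mem_filter, Finset.mem_product, Finset.mem_range] at hp
            show (i0 + (j0 - i0), i0) = (j0, i0)
            rw [show i0 + (j0 - i0) = j0 from by omega]
          · rintro ⟨i0, j0⟩ hq
            simp only [Finset.mem_filter, Finset.mem_product, Finset.mem_range] at hq
            show (i0, i0 + j0 - i0) = (i0, j0)
            rw [show i0 + j0 - i0 = j0 from by omega]
          · rintro ⟨j0, i0⟩ hp
            simp only [Finset.mem_filter, Finset.mem_product, Finset.mem_range] at hp
            show dterm l m (extF k ⇑φ) Ψ X a (j0, i0)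
              = dterm l m (extF k ⇑φ) Ψ X a (i0 + (j0 - i0), i0)
            rw [show i0 + (j0 - i0) = j0 from by omega]
      _ = ∑ i ∈ Finset.range k, ∑ j' ∈ Finset.range l,
            dterm l m (extF k ⇑φ) Ψ X a (i + j', i) := Finset.sum_product _ _ _
      _ = circ k (l + m - 1) (extF k ⇑φ) (circ l m Ψ X) a := by
          rw [circ_apply]
          refine Finset.sum_congr rfl fun i hi => ?_
          rw [hstep i hi]
          refine Finset.sum_congr rfl fun j' hj' => ?_
          have hjl : j' < l := Finset.mem_range.mp hj'
          have hik : i < k := Finset.mem_range.mp hi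
          simp only [dterm]
          have hsgn : ((-1 : ℤ)) ^ ((m + 1) * (i + j') + (l + 1) * i)
              = (-1 : ℤ) ^ ((l + m - 1 + 1) * i + (m + 1) * j') := by
            rw [show (m + 1) * (i + j') + (l + 1) * i
                = ((l + m - 1 + 1) * i + (m + 1) * j') + 2 * i from ?_,
              neg_one_pow_add_two_mul]
            rw [show l + m - 1 + 1 = l + m from by omega]
            ring
          rw [hsgn]
          congr 1
          have harg : (fun q => (ins (i + j') m (X fun q' => a (i + j' + q')) a) (i + q))
              = ins j' m (X fun q' => a (i + (j' + q'))) fun q => a (i + q) := by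
            funext q
            simp only [ins]
            split_ifs <;>
              first
                | rfl
                | omega
                | (congr 1; omega)
                | (congr 1; funext q'; congr 1; omega)
          rw [harg]
          congr 1
          funext p
          simp only [ins]
          split_ifs <;>
            first
              | rfl
              | omega
              | (congr 1; omega)
  rw [hL,
    ← Finset.sum_filter_add_sum_filter_not (Finset.range (k + l - 1) ×ˢ Finset.range k)
      (fun p => p.2 ≤ p.1 ∧ p.1 < p.2 + l) (dterm l m (extF k ⇑φ) Ψ X a),
    ← Finset.sum_filter_add_sum_filter_not
      ((Finset.range (k + l - 1) ×ˢ Finset.range k).filter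
        (fun p => ¬(p.2 ≤ p.1 ∧ p.1 < p.2 + l)))
      (fun p => p.1 < p.2) (dterm l m (extF k ⇑φ) Ψ X a),
    Finset.filter_filter, Finset.filter_filter, hnest]
  rw [show ((Finset.range (k + l - 1) ×ˢ Finset.range k).filter
      fun p => ¬(p.2 ≤ p.1 ∧ p.1 < p.2 + l) ∧ p.1 < p.2)
      = (Finset.range (k + l - 1) ×ˢ Finset.range k).filter fun p => p.1 < p.2 from
    Finset.filter_congr fun p _ => by constructor <;> intro h' <;> [exact h'.2; omega]]
  rw [show ((Finset.range (k + l - 1) ×ˢ Finset.range k).filter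
      fun p => ¬(p.2 ≤ p.1 ∧ p.1 < p.2 + l) ∧ ¬p.1 < p.2)
      = (Finset.range (k + l - 1) ×ˢ Finset.range k).filter fun p => p.2 + l ≤ p.1 from
    Finset.filter_congr fun p _ => by constructor <;> intro h' <;> omega]
  rw [Bsum, Csum, add_assoc]

theorem preLie (l m : ℕ) (g : (Fin l → V) → V) (h : (Fin m → V) → V) :
    circ (k + l - 1) m (circ k l (extF k ⇑φ) (extF l g)) (extF m h)
        - circ k (l + m - 1) (extF k ⇑φ) (circ l m (extF l g) (extF m h))
      = ((-1 : ℤ) ^ ((l + 1) * (m + 1))) •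
          (circ (k + m - 1) l (circ k m (extF k ⇑φ) (extF m h)) (extF l g)
            - circ k (m + l - 1) (extF k ⇑φ) (circ m l (extF m h) (extF l g))) := by
  funext a
  simp only [Pi.sub_apply, Pi.smul_apply]
  have d1 := decomp φ l m (extF l g) (extF m h) a
  have d2 := decomp φ m l (extF m h) (extF l g) a
  have b1 := BC_match k l m (extF k ⇑φ) g h a
  have b2 := BC_match k m l (extF k ⇑φ) h g a
  have hc : ((-1 : ℤ) ^ ((m + 1) * (l + 1))) = (-1 : ℤ) ^ ((l + 1) * (m + 1)) := by
    rw [Nat.mul_comm]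
  rw [hc] at b2
  rw [d1, d2, b1, b2]
  simp only [smul_sub, smul_add, smul_smul, neg_one_pow_sq, one_smul]
  abel

end Mult

section Mult2
variable {V : Type*} [AddCommGroup V] {K : Type*} [CommRing K] [Module K V]

theorem gerst_zero (Q R : (ℕ → V) → V) : gerstBracket 0 0 Q R = 0 := by
  funext a; simp [gerstBracket, circ]

theorem bracket_expand (p q r : ℕ) (P : MultilinearMap K (fun _ : Fin p => V) V)
    (Q R : (ℕ → V) → V) :
    gerstBracket p (q + r - 1) (extF p ⇑P) (gerstBracket q r Q R)
      = circ p (q + r - 1) (extF p ⇑P) (gerstBracket q r Q R)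
        - ((-1 : ℤ) ^ ((p + 1) * (q + 1)) * (-1 : ℤ) ^ ((p + 1) * (r + 1))) •
            circ (q + r - 1) p (gerstBracket q r Q R) (extF p ⇑P) := by
  rcases Nat.eq_zero_or_pos (q + r) with hqr | hqr
  · obtain ⟨hq, hr⟩ : q = 0 ∧ r = 0 := by omega
    subst hq; subst hr
    rw [gerst_zero]
    show circ p (0 + 0 - 1) (extF p ⇑P) 0
        - ((-1 : ℤ) ^ ((p + 1) * ((0 + 0 - 1) + 1))) • circ (0 + 0 - 1) p 0 (extF p ⇑P) = _
    rw [circ_zero_right, circ_zero_left]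
    simp
  · have hs : (-1 : ℤ) ^ ((p + 1) * (q + 1)) * (-1 : ℤ) ^ ((p + 1) * (r + 1))
        = (-1 : ℤ) ^ ((p + 1) * ((q + r - 1) + 1)) := by
      rw [← pow_add, show q + r - 1 + 1 = q + r from by omega,
        show (p + 1) * (q + 1) + (p + 1) * (r + 1) = (p + 1) * (q + r) + 2 * (p + 1) from by ring,
        neg_one_pow_add_two_mul]
    rw [hs]
    rfl

end Mult2
end GerstAux

open GerstAux

theorem gerstBracket_graded_lie (K V : Type*) [CommRing K] [AddCommGroup V] [Module K V]
    (k l m : ℕ)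
    (φ : MultilinearMap K (fun _ : Fin k => V) V)
    (ψ : MultilinearMap K (fun _ : Fin l => V) V)
    (χ : MultilinearMap K (fun _ : Fin m => V) V) :
    (gerstBracket k l (extF k ⇑φ) (extF l ⇑ψ)
        = -(((-1 : ℤ) ^ ((k + 1) * (l + 1))) • gerstBracket l k (extF l ⇑ψ) (extF k ⇑φ))) ∧
    (((-1 : ℤ) ^ ((k + 1) * (m + 1))) •
          gerstBracket k (l + m - 1) (extF k ⇑φ) (gerstBracket l m (extF l ⇑ψ) (extF m ⇑χ))
        + ((-1 : ℤ) ^ ((l + 1) * (k + 1))) •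
          gerstBracket l (m + k - 1) (extF l ⇑ψ) (gerstBracket m k (extF m ⇑χ) (extF k ⇑φ))
        + ((-1 : ℤ) ^ ((m + 1) * (l + 1))) •
          gerstBracket m (k + l - 1) (extF m ⇑χ) (gerstBracket k l (extF k ⇑φ) (extF l ⇑ψ))
        = 0) := by
  constructor
  · have hc : ((-1 : ℤ) ^ ((l + 1) * (k + 1))) = (-1 : ℤ) ^ ((k + 1) * (l + 1)) := by
      rw [Nat.mul_comm]
    unfold gerstBracket
    rw [hc, smul_sub, smul_smul, neg_one_pow_sq, one_smul, neg_sub]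
  · -- Jacobi
    rw [bracket_expand k l m φ (extF l ⇑ψ) (extF m ⇑χ),
      bracket_expand l m k ψ (extF m ⇑χ) (extF k ⇑φ),
      bracket_expand m k l χ (extF k ⇑φ) (extF l ⇑ψ)]
    unfold gerstBracket
    simp only [circ_sub_right, circ_zsmul_right, circ_sub_left, circ_zsmul_left]
    -- canonicalize exponents
    simp only [show (l + 1) * (k + 1) = (k + 1) * (l + 1) from by ring,
      show (m + 1) * (k + 1) = (k + 1) * (m + 1) from by ring,
      show (m + 1) * (l + 1) = (l + 1) * (m + 1) from by ring]
    have P1 := preLie φ l m ⇑ψ ⇑χ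
    have P2 := preLie ψ m k ⇑χ ⇑φ
    have P3 := preLie χ k l ⇑φ ⇑ψ
    simp only [show k + m - 1 = m + k - 1 from by omega,
      show m + l - 1 = l + m - 1 from by omega] at P1
    simp only [show l + k - 1 = k + l - 1 from by omega,
      show k + m - 1 = m + k - 1 from by omega,
      show (m + 1) * (k + 1) = (k + 1) * (m + 1) from by ring] at P2
    simp only [show m + l - 1 = l + m - 1 from by omega,
      show l + k - 1 = k + l - 1 from by omega,
      show (k + 1) * (l + 1) = (k + 1) * (l + 1) from by ring] at P3
    rw [smul_sub, sub_eq_iff_eq_add] at P1 P2 P3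
    rw [P1, P2, P3]
    have hkl := neg_one_pow_sq ((k + 1) * (l + 1))
    have hkm := neg_one_pow_sq ((k + 1) * (m + 1))
    have hlm := neg_one_pow_sq ((l + 1) * (m + 1))
    set ekl := (-1 : ℤ) ^ ((k + 1) * (l + 1)) with hekl
    set ekm := (-1 : ℤ) ^ ((k + 1) * (m + 1)) with hekm
    set elm := (-1 : ℤ) ^ ((l + 1) * (m + 1)) with helm
    clear_value ekl ekm elm
    have h2kl : ekl ^ 2 = 1 := by rw [sq]; exact hkl
    have h2km : ekm ^ 2 = 1 := by rw [sq]; exact hkm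
    have h2lm : elm ^ 2 = 1 := by rw [sq]; exact hlm
    have h3kl : ekl ^ 3 = ekl := by rw [pow_succ, h2kl, one_mul]
    have h3km : ekm ^ 3 = ekm := by rw [pow_succ, h2km, one_mul]
    have h3lm : elm ^ 3 = elm := by rw [pow_succ, h2lm, one_mul]
    match_scalars <;> (ring_nf; simp only [h2kl, h2km, h2lm, h3kl, h3km, h3lm]; ring1)
end

section
/- Let K be a commutative ring and A a unital commutative K-algebra. Every k-multiderivation of A, i.e., every K-multilinear map φ : A^k → A that is a derivation in each of its k arguments (φ(a_1,…,a_i b_i,…,a_k) = a_i φ(a_1,…,b_i,…,a_k) + b_i φ(a_1,…,a_i,…,a_k) for each i), is a Hochschild cocycle: dφ = 0 for the Hochschild differential. Consequently the Hochschild–Kostant–Rosenberg map, sending a multiderivation to itself regarded as a Hochschild cochain, is a morphism of complexes from the space of multiderivations equipped with the zero differential to the Hochschild cochain complex. -/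
def hochschildDiff {A : Type*} [Ring A] (k : ℕ) (Φ : (ℕ → A) → A) : (ℕ → A) → A :=
  fun a =>
    a 0 * Φ (fun i => a (i + 1))
    + ∑ i ∈ Finset.range k, ((-1 : ℤ) ^ (i + 1)) •
        Φ (fun j => if j < i then a j else if j = i then a i * a (i + 1) else a (j + 1))
    + ((-1 : ℤ) ^ (k + 1)) • (Φ a * a k)

/-- Every multiderivation of a commutative algebra is a Hochschild cocycle. -/
theorem multiderivation_is_hochschild_cocycle (K A : Type*) [CommRing K] [CommRing A]
    [Algebra K A] (k : ℕ) (φ : MultilinearMap K (fun _ : Fin k => A) A)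
    (hφ : ∀ (i : Fin k) (a : Fin k → A) (x y : A),
      φ (Function.update a i (x * y))
        = x * φ (Function.update a i y) + y * φ (Function.update a i x)) :
    hochschildDiff k (extF k ⇑φ) = 0 := by
  funext a
  -- `v i` : the sequence `a` with index `i` skipped
  set v : ℕ → Fin k → A := fun i j => if (j : ℕ) < i then a j else a (j + 1) with hv
  set f : ℕ → A := fun i => ((-1 : ℤ) ^ i) • (a i * φ (v i)) with hf
  have hmerge : ∀ i ∈ Finset.range k,
      ((-1 : ℤ) ^ (i + 1)) • (extF k ⇑φ)
          (fun j => if j < i then a j else if j = i then a i * a (i + 1) else a (j + 1))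
        = f (i + 1) - f i := by
    intro i hi
    rw [Finset.mem_range] at hi
    have harg : (fun j : Fin k =>
        if (j : ℕ) < i then a j else if (j : ℕ) = i then a i * a (i + 1) else a (j + 1))
        = Function.update (v i) ⟨i, hi⟩ (a i * a (i + 1)) := by
      funext j
      rcases lt_trichotomy (j : ℕ) i with h | h | h
      · rw [Function.update_of_ne (by simp [Fin.ext_iff]; omega)]
        simp [hv, h]
      · have : j = ⟨i, hi⟩ := Fin.ext h
        subst this
        simp
      · rw [Function.update_of_ne (by simp [Fin.ext_iff]; omega)]
        simp only [hv, if_neg (show ¬ (j : ℕ) < i from by omega),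
          if_neg (show ¬ (j : ℕ) = i from by omega)]
    have h1 : Function.update (v i) ⟨i, hi⟩ (a (i + 1)) = v i := by
      funext j
      rcases eq_or_ne j (⟨i, hi⟩ : Fin k) with h | h
      · subst h; simp [hv]
      · rw [Function.update_of_ne h]
    have h2 : Function.update (v i) ⟨i, hi⟩ (a i) = v (i + 1) := by
      funext j
      rcases eq_or_ne j (⟨i, hi⟩ : Fin k) with h | h
      · subst h; simp [hv]
      · rw [Function.update_of_ne h]
        have hne : (j : ℕ) ≠ i := by simpa [Fin.ext_iff] using h
        simp only [hv]
        by_cases hj : (j : ℕ) < i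
        · rw [if_pos hj, if_pos (by omega)]
        · rw [if_neg hj, if_neg (by omega)]
    have := hφ ⟨i, hi⟩ (v i) (a i) (a (i + 1))
    rw [h1, h2] at this
    show ((-1 : ℤ) ^ (i + 1)) • φ (fun j : Fin k =>
        if (j : ℕ) < i then a j else if (j : ℕ) = i then a i * a (i + 1) else a (j + 1))
      = f (i + 1) - f i
    rw [harg, this, hf]
    simp only [zsmul_eq_mul]
    push_cast
    ring
  show a 0 * φ (fun j : Fin k => a (j + 1))
      + (∑ i ∈ Finset.range k, ((-1 : ℤ) ^ (i + 1)) • (extF k ⇑φ)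
          (fun j => if j < i then a j else if j = i then a i * a (i + 1) else a (j + 1)))
      + ((-1 : ℤ) ^ (k + 1)) • (φ (fun j : Fin k => a j) * a k) = 0
  rw [Finset.sum_congr rfl hmerge, Finset.sum_range_sub f]
  have e0 : (fun j : Fin k => if (j : ℕ) < 0 then a j else a (j + 1))
      = fun j : Fin k => a (j + 1) := by funext j; simp
  have ek : (fun j : Fin k => if (j : ℕ) < k then a j else a (j + 1))
      = fun j : Fin k => a j := by funext j; simp [j.isLt]
  have hf0 : f 0 = a 0 * φ (fun j : Fin k => a (j + 1)) := by
    simp only [hf, hv, pow_zero, one_smul, e0]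
  have hfk : f k = ((-1 : ℤ) ^ k) • (a k * φ (fun j : Fin k => a j)) := by
    simp only [hf, hv, ek]
  rw [hf0, hfk]
  simp only [zsmul_eq_mul]
  push_cast
  ring
end
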